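/- A bipartite channel N is PPT if and only if it is completely PPT-preserving: (J^N)^{T_B} ≥ 0 if and only if for every reference system R and every state ρ on R A₀ B₀ with ρ^{T_{B₀ B_R}} ≥ 0 (PPT across the Alice/Bob cut, where R is split between them), the output (id_R ⊗ N)(ρ) is PPT across the same cut. -/

import Mathlib

/-!
Conjugating by the partial transpose on Bob's side commutes with adjoining reference systems:
`T_{B_R B₁} ∘ (id_R ⊗ N) ∘ T_{B_R B₀} = id_R ⊗ (T_{B₁} ∘ N ∘ T_{B₀})`. Hence N is completely
PPT-preserving iff the conjugated map sends positive matrices to positive matrices on every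
extension, which by Choi's theorem holds iff its Choi matrix `(J^N)^{T_B}` is positive.
For the converse direction only one input is needed: the normalized maximally entangled state
between `R_A R_B` and `A₀ B₀`, which is invariant under the partial transpose and whose image
under `id_R ⊗ N` is, up to reindexing, the Choi matrix.
-/

open Matrix
open scoped ComplexOrder Kronecker

/-- Partial transpose on the second tensor factor. -/
def ptB {α β : Type*} (ρ : Matrix (α × β) (α × β) ℂ) : Matrix (α × β) (α × β) ℂ :=
  Matrix.of fun p q => ρ (p.1, q.2) (q.1, p.2)

/-- The Choi matrix J^N = Σ_{ij} E_{ij} ⊗ N(E_{ij}) of a linear map between matrix spaces. -/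
def choi {ι κ : Type*} [Fintype ι] [DecidableEq ι]
    (N : Matrix ι ι ℂ →ₗ[ℂ] Matrix κ κ ℂ) : Matrix (ι × κ) (ι × κ) ℂ :=
  Matrix.of fun p q => N (Matrix.single p.1 q.1 1) p.2 q.2

/-- Partial transpose of the Choi matrix of a bipartite channel over Bob's input (B₀)
and output (B₁) indices. -/
def ptPair {a0 b0 a1 b1 : Type*}
    (J : Matrix ((a0 × b0) × (a1 × b1)) ((a0 × b0) × (a1 × b1)) ℂ) :
    Matrix ((a0 × b0) × (a1 × b1)) ((a0 × b0) × (a1 × b1)) ℂ :=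
  Matrix.of fun p q =>
    J ((p.1.1, q.1.2), (p.2.1, q.2.2)) ((q.1.1, p.1.2), (q.2.1, p.2.2))

/-- Complete positivity: id_k ⊗ N maps positive semidefinite matrices to positive
semidefinite matrices for every k. -/
def IsCompletelyPositive {ι κ : Type*} [Fintype ι] [DecidableEq ι] [Fintype κ]
    (N : Matrix ι ι ℂ →ₗ[ℂ] Matrix κ κ ℂ) : Prop :=
  ∀ (k : ℕ) (ρ : Matrix (Fin k × ι) (Fin k × ι) ℂ), ρ.PosSemidef →
    (Matrix.of (fun (p q : Fin k × κ) => N (Matrix.of fun i j => ρ (p.1, i) (q.1, j)) p.2 q.2)).PosSemidef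

/-- The conjugation T_{B₁} ∘ Λ ∘ T_{B₀} of a map between bipartite systems by the
partial transpose on Bob's input and output. -/
def pptConj {α β α' β' : Type*} [Fintype α] [Fintype β] [DecidableEq α] [DecidableEq β]
    (Λ : Matrix (α × β) (α × β) ℂ →ₗ[ℂ] Matrix (α' × β') (α' × β') ℂ) :
    Matrix (α × β) (α × β) ℂ →ₗ[ℂ] Matrix (α' × β') (α' × β') ℂ where
  toFun X := ptB (Λ (ptB X))
  map_add' X Y := by
    show ptB (Λ (ptB (X + Y))) = _
    rw [show ptB (X + Y) = ptB X + ptB Y from rfl, map_add]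
    rfl
  map_smul' c X := by
    show ptB (Λ (ptB (c • X))) = _
    rw [show ptB (c • X) = c • ptB X from rfl, LinearMap.map_smul]
    rfl

/-- The extension id_{R_A} ⊗ id_{R_B} ⊗ N of a bipartite map N to reference systems
R_A (held by Alice) and R_B (held by Bob). -/
def extChan {a0 b0 a1 b1 : Type*} [Fintype a0] [Fintype b0] [DecidableEq a0] [DecidableEq b0]
    (rA rB : ℕ)
    (N : Matrix (a0 × b0) (a0 × b0) ℂ →ₗ[ℂ] Matrix (a1 × b1) (a1 × b1) ℂ)
    (ρ : Matrix ((Fin rA × a0) × (Fin rB × b0)) ((Fin rA × a0) × (Fin rB × b0)) ℂ) :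
    Matrix ((Fin rA × a1) × (Fin rB × b1)) ((Fin rA × a1) × (Fin rB × b1)) ℂ :=
  Matrix.of fun p q =>
    N (Matrix.of fun u v => ρ ((p.1.1, u.1), (p.2.1, u.2)) ((q.1.1, v.1), (q.2.1, v.2)))
      (p.1.2, p.2.2) (q.1.2, q.2.2)

theorem Matrix.PosSemidef.blockSum {R P U : Type*} [Ring R] [PartialOrder R] [StarRing R]
    [Fintype P] [Fintype U] [DecidableEq P] {M : Matrix (P × U) (P × U) R} (hM : M.PosSemidef) :
    (Matrix.of fun p q => ∑ u, ∑ v, M (p, u) (q, v)).PosSemidef := by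
  let K : Matrix (P × U) P R := Matrix.of fun x p => if x.1 = p then 1 else 0
  convert hM.conjTranspose_mul_mul_same K using 1
  ext p q
  simp only [Matrix.mul_apply, Fintype.sum_prod_type, Matrix.of_apply]
  rw [Finset.sum_comm]
  simp [K, apply_ite star, ite_mul]

theorem ptB_smul {α β : Type*} (c : ℂ) (ρ : Matrix (α × β) (α × β) ℂ) :
    ptB (c • ρ) = c • ptB ρ :=
  rfl

theorem ptB_single {α β : Type*} [DecidableEq α] [DecidableEq β] (i j : α × β) :
    ptB (Matrix.single i j (1 : ℂ)) = Matrix.single (i.1, j.2) (j.1, i.2) 1 := by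
  ext u v
  simp only [ptB, Matrix.of_apply, Matrix.single_apply, Prod.ext_iff]
  exact if_congr (by tauto) rfl rfl

section MaxEntangled

variable (α β : Type*) [DecidableEq α] [DecidableEq β]

/-- The unnormalized vector `Σ_{i,j} |i i⟩ ⊗ |j j⟩`, indexed as `(R_A × A₀) × (R_B × B₀)`. -/
def maxEntangledVec : (α × α) × (β × β) → ℂ :=
  fun P => if P.1.1 = P.1.2 ∧ P.2.1 = P.2.2 then 1 else 0

def maxEntangled : Matrix ((α × α) × (β × β)) ((α × α) × (β × β)) ℂ :=
  vecMulVec (maxEntangledVec α β) (star (maxEntangledVec α β))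

theorem maxEntangled_apply (P Q : (α × α) × (β × β)) :
    maxEntangled α β P Q =
      if P.1.1 = P.1.2 ∧ P.2.1 = P.2.2 ∧ Q.1.1 = Q.1.2 ∧ Q.2.1 = Q.2.2 then 1 else 0 := by
  simp only [maxEntangled, maxEntangledVec, vecMulVec_apply, Pi.star_apply]
  split_ifs <;> simp_all

theorem maxEntangled_posSemidef [Fintype α] [Fintype β] : (maxEntangled α β).PosSemidef :=
  posSemidef_vecMulVec_self_star _

theorem ptB_maxEntangled : ptB (maxEntangled α β) = maxEntangled α β := by
  ext P Q
  simp only [ptB, Matrix.of_apply, maxEntangled_apply]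
  exact if_congr (by tauto) rfl rfl

theorem trace_maxEntangled [Fintype α] [Fintype β] :
    (maxEntangled α β).trace = Fintype.card α * Fintype.card β := by
  simp only [trace, diag_apply, maxEntangled_apply, Fintype.sum_prod_type]
  simp [ite_and]

end MaxEntangled

section Channels

variable {a0 b0 a1 b1 : Type*} [Fintype a0] [Fintype b0] [DecidableEq a0] [DecidableEq b0]

theorem apply_eq_sum_choi (Λ : Matrix (a0 × b0) (a0 × b0) ℂ →ₗ[ℂ] Matrix (a1 × b1) (a1 × b1) ℂ)
    (X : Matrix (a0 × b0) (a0 × b0) ℂ) (p q : a1 × b1) :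
    Λ X p q = ∑ u, ∑ v, X u v * choi Λ (u, p) (v, q) := by
  conv_lhs => rw [matrix_eq_sum_single X]
  simp only [map_sum, Matrix.sum_apply]
  refine Finset.sum_congr rfl fun u _ => Finset.sum_congr rfl fun v _ => ?_
  rw [← mul_one (X u v), ← smul_eq_mul, ← Matrix.smul_single, LinearMap.map_smul]
  simp [choi]

theorem extChan_eq_sum_choi (rA rB : ℕ)
    (Λ : Matrix (a0 × b0) (a0 × b0) ℂ →ₗ[ℂ] Matrix (a1 × b1) (a1 × b1) ℂ)
    (σ : Matrix ((Fin rA × a0) × (Fin rB × b0)) ((Fin rA × a0) × (Fin rB × b0)) ℂ) :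
    extChan rA rB Λ σ = Matrix.of fun p q => ∑ u, ∑ v,
      σ ((p.1.1, u.1), (p.2.1, u.2)) ((q.1.1, v.1), (q.2.1, v.2)) *
        choi Λ (u, (p.1.2, p.2.2)) (v, (q.1.2, q.2.2)) := by
  ext p q
  exact apply_eq_sum_choi Λ _ _ _

/-- Choi's theorem, one direction: `(id ⊗ Λ)(σ)` is a sum of blocks of a principal submatrix
of `σ ⊗ J^Λ`. -/
theorem extChan_posSemidef [Fintype a1] [Fintype b1]
    {Λ : Matrix (a0 × b0) (a0 × b0) ℂ →ₗ[ℂ] Matrix (a1 × b1) (a1 × b1) ℂ}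
    (hΛ : (choi Λ).PosSemidef) {rA rB : ℕ}
    {σ : Matrix ((Fin rA × a0) × (Fin rB × b0)) ((Fin rA × a0) × (Fin rB × b0)) ℂ}
    (hσ : σ.PosSemidef) : (extChan rA rB Λ σ).PosSemidef := by
  classical
  rw [extChan_eq_sum_choi]
  exact ((hσ.kronecker hΛ).submatrix fun x : ((Fin rA × a1) × (Fin rB × b1)) × (a0 × b0) =>
    (((x.1.1.1, x.2.1), (x.1.2.1, x.2.2)), (x.2, (x.1.1.2, x.1.2.2)))).blockSum

theorem ptB_extChan (rA rB : ℕ)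
    (Λ : Matrix (a0 × b0) (a0 × b0) ℂ →ₗ[ℂ] Matrix (a1 × b1) (a1 × b1) ℂ)
    (ρ : Matrix ((Fin rA × a0) × (Fin rB × b0)) ((Fin rA × a0) × (Fin rB × b0)) ℂ) :
    ptB (extChan rA rB Λ ρ) = extChan rA rB (pptConj Λ) (ptB ρ) :=
  rfl

theorem choi_pptConj
    (Λ : Matrix (a0 × b0) (a0 × b0) ℂ →ₗ[ℂ] Matrix (a1 × b1) (a1 × b1) ℂ) :
    choi (pptConj Λ) = ptPair (choi Λ) := by
  ext p q
  change ptB (Λ (ptB (Matrix.single p.1 q.1 1))) p.2 q.2 = _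
  rw [ptB_single]
  rfl

theorem extChan_smul (rA rB : ℕ)
    (Λ : Matrix (a0 × b0) (a0 × b0) ℂ →ₗ[ℂ] Matrix (a1 × b1) (a1 × b1) ℂ) (c : ℂ)
    (ρ : Matrix ((Fin rA × a0) × (Fin rB × b0)) ((Fin rA × a0) × (Fin rB × b0)) ℂ) :
    extChan rA rB Λ (c • ρ) = c • extChan rA rB Λ ρ := by
  ext p q
  change Λ (c • Matrix.of fun u v => ρ ((p.1.1, u.1), (p.2.1, u.2)) ((q.1.1, v.1), (q.2.1, v.2)))
    _ _ = _
  rw [map_smul]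
  rfl

theorem extChan_maxEntangled_submatrix {a b : ℕ}
    (Λ : Matrix (Fin a × Fin b) (Fin a × Fin b) ℂ →ₗ[ℂ] Matrix (a1 × b1) (a1 × b1) ℂ) :
    (extChan a b Λ (maxEntangled (Fin a) (Fin b))).submatrix
        (fun P => ((P.1.1, P.2.1), (P.1.2, P.2.2))) (fun P => ((P.1.1, P.2.1), (P.1.2, P.2.2))) =
      choi Λ := by
  ext P Q
  simp only [submatrix_apply, extChan, choi, Matrix.of_apply]
  refine congrArg (fun X => Λ X (P.2.1, P.2.2) (Q.2.1, Q.2.2)) ?_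
  ext u v
  simp only [Matrix.of_apply, maxEntangled_apply, Matrix.single_apply, Prod.ext_iff]
  exact if_congr (by tauto) rfl rfl

end Channels

theorem stmt_13_general (a0 b0 a1 b1 : ℕ)
    (N : Matrix (Fin a0 × Fin b0) (Fin a0 × Fin b0) ℂ →ₗ[ℂ]
         Matrix (Fin a1 × Fin b1) (Fin a1 × Fin b1) ℂ) :
    (ptPair (choi N)).PosSemidef ↔
      ∀ (rA rB : ℕ)
        (ρ : Matrix ((Fin rA × Fin a0) × (Fin rB × Fin b0))
                    ((Fin rA × Fin a0) × (Fin rB × Fin b0)) ℂ),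
        ρ.PosSemidef → ρ.trace = 1 → (ptB ρ).PosSemidef →
        (ptB (extChan rA rB N ρ)).PosSemidef := by
  refine ⟨fun hJ rA rB ρ _ _ hρ => ?_, fun h => ?_⟩
  · rw [ptB_extChan]
    exact extChan_posSemidef (choi_pptConj N ▸ hJ) hρ
  rcases Nat.eq_zero_or_pos (a0 * b0) with hd | hd
  · have : IsEmpty (Fin a0 × Fin b0) := by
      rcases Nat.mul_eq_zero.1 hd with rfl | rfl <;> infer_instance
    convert PosSemidef.zero
    exact Subsingleton.elim _ _
  set Φ := maxEntangled (Fin a0) (Fin b0)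
  set d : ℂ := ((a0 * b0 : ℕ) : ℂ)
  have hd0 : d ≠ 0 := Nat.cast_ne_zero.2 hd.ne'
  have hΦ : Φ.PosSemidef := maxEntangled_posSemidef _ _
  have htrace : (d⁻¹ • Φ).trace = 1 := by
    rw [trace_smul, trace_maxEntangled, Fintype.card_fin, Fintype.card_fin, smul_eq_mul,
      ← Nat.cast_mul, inv_mul_cancel₀ hd0]
  have hout := h a0 b0 (d⁻¹ • Φ) (hΦ.smul (by positivity)) htrace
    (by rw [ptB_smul, ptB_maxEntangled]; exact hΦ.smul (by positivity))
  rw [extChan_smul, ptB_smul] at hout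
  have := (hout.smul (by positivity : (0 : ℂ) ≤ d)).submatrix
    (fun P : (Fin a0 × Fin b0) × (Fin a1 × Fin b1) => ((P.1.1, P.2.1), (P.1.2, P.2.2)))
  rwa [smul_smul, mul_inv_cancel₀ hd0, one_smul, ptB_extChan, ptB_maxEntangled,
    extChan_maxEntangled_submatrix, choi_pptConj] at this

/-- A bipartite channel is PPT iff it is completely PPT-preserving: its Choi matrix has
positive partial transpose over Bob's systems iff, for all reference systems split
between Alice and Bob, it sends states that are PPT across the Alice/Bob cut to states
that are PPT across the same cut. -/
theorem stmt_13 (a0 b0 a1 b1 : ℕ)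
    (N : Matrix (Fin a0 × Fin b0) (Fin a0 × Fin b0) ℂ →ₗ[ℂ]
         Matrix (Fin a1 × Fin b1) (Fin a1 × Fin b1) ℂ)
    (hcp : IsCompletelyPositive N) (htp : ∀ ρ, (N ρ).trace = ρ.trace) :
    (ptPair (choi N)).PosSemidef ↔
      ∀ (rA rB : ℕ)
        (ρ : Matrix ((Fin rA × Fin a0) × (Fin rB × Fin b0))
                    ((Fin rA × Fin a0) × (Fin rB × Fin b0)) ℂ),
        ρ.PosSemidef → ρ.trace = 1 → (ptB ρ).PosSemidef →
        (ptB (extChan rA rB N ρ)).PosSemidef :=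
  stmt_13_general a0 b0 a1 b1 N
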